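/- Let Λ be a real random variable whose CDF F is r-times continuously differentiable in a neighborhood of 0 with F(0) = τ, and let Ĩ' be a symmetric kernel of order r supported on [-1,1]. Then E[Ĩ(-Λ/h) - τ] = O(h^r) as h → 0⁺; more precisely it equals (h^r/r!)(∫_{-1}^{1} v^r Ĩ'(v) dv) f^{(r-1)}(0) + O(h^{r+1}), where f = F'. -/

import Mathlib

/-!
Fubini turns `E[Ĩ(-Λ/h)]` into the kernel average `∫ K(v) F(hv) dv` over `[-1, 1]`; the symmetry
of `K` absorbs the sign flip `v ↦ -v`. Replacing `F` by its Taylor polynomial of degree `r` at `0`,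
the moment conditions on `K` kill every term except the constant `τ` and the degree-`r` term,
while the Taylor remainder `O(x^(r+1))` averages to `O(h^(r+1))` because `|hv| ≤ h` on `[-1, 1]`.
-/

open MeasureTheory Filter Asymptotics
open Set
open scoped Topology Nat

theorem ContDiffAt.isBigO_sub_taylorWithinEval_univ {f : ℝ → ℝ} {x₀ : ℝ} {n : ℕ}
    (hf : ContDiffAt ℝ (n + 1) f x₀) :
    (fun x ↦ f x - taylorWithinEval f n univ x₀ x) =O[𝓝 x₀] fun x ↦ (x - x₀) ^ (n + 1) := by
  obtain ⟨u, hu, hfu⟩ := hf.contDiffOn le_rfl (by simp)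
  obtain ⟨δ, hδ, hball⟩ := Metric.mem_nhds_iff.mp hu
  have hx₀ : x₀ ∈ Metric.ball x₀ δ := Metric.mem_ball_self hδ
  have hT : ∀ k x,
      taylorWithinEval f k (Metric.ball x₀ δ) x₀ x = taylorWithinEval f k univ x₀ x := by
    intro k x
    simp only [taylor_within_apply, iteratedDerivWithin_univ,
      iteratedDerivWithin_of_isOpen Metric.isOpen_ball hx₀]
  have hlo := taylor_isLittleO (convex_ball x₀ δ) hx₀ (n := n + 1)
    (by exact_mod_cast hfu.mono hball)
  rw [nhdsWithin_eq_nhds.mpr (Metric.ball_mem_nhds x₀ hδ)] at hlo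
  -- the order-`n` remainder is the order-`(n + 1)` one plus the top Taylor term
  refine (hlo.isBigO.add ((isBigO_refl _ _).const_mul_left
    ((((n:ℝ) + 1) * n !)⁻¹ * iteratedDeriv (n + 1) f x₀))).congr_left fun x ↦ ?_
  rw [taylorWithinEval_succ, hT, iteratedDerivWithin_of_isOpen Metric.isOpen_ball hx₀,
    smul_eq_mul]
  ring

theorem taylorWithinEval_univ_zero_mul (f : ℝ → ℝ) (n : ℕ) (h v : ℝ) :
    taylorWithinEval f n univ 0 (h * v) =
      ∑ k ∈ Finset.range (n + 1), iteratedDeriv k f 0 * h ^ k / k ! * v ^ k := by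
  simp only [taylor_within_apply, iteratedDerivWithin_univ, sub_zero, smul_eq_mul]
  exact Finset.sum_congr rfl fun k _ ↦ by ring

theorem isBigO_intervalIntegral_mul_comp_mul {K g : ℝ → ℝ} {M : ℝ} (hK : ∀ v, |K v| ≤ M)
    {n : ℕ} (hg : g =O[𝓝 0] fun x ↦ x ^ n) :
    (fun h ↦ ∫ v in (-1:ℝ)..1, K v * g (h * v)) =O[𝓝 0] fun h ↦ h ^ n := by
  obtain ⟨c, hc, hcg⟩ := hg.exists_pos
  obtain ⟨δ, hδ, hδg⟩ := Metric.eventually_nhds_iff.mp hcg.bound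
  have hM : 0 ≤ M := (abs_nonneg _).trans (hK 0)
  refine IsBigO.of_bound (2 * M * c) ?_
  filter_upwards [Metric.ball_mem_nhds 0 hδ] with h hh
  have hpt : ∀ v ∈ uIoc (-1:ℝ) 1, ‖K v * g (h * v)‖ ≤ M * (c * ‖h ^ n‖) := by
    intro v hv
    rw [uIoc_of_le (by norm_num)] at hv
    have hhv : ‖h * v‖ ≤ ‖h‖ := by
      rw [norm_mul]
      exact mul_le_of_le_one_right (norm_nonneg h) (abs_le.mpr ⟨hv.1.le, hv.2⟩)
    have hgv : ‖g (h * v)‖ ≤ c * ‖(h * v) ^ n‖ :=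
      hδg (lt_of_le_of_lt (by simpa using hhv) (by simpa using hh))
    rw [norm_mul]
    gcongr
    · exact hK v
    · exact hgv.trans (by rw [norm_pow, norm_pow]; gcongr)
  calc ‖∫ v in (-1:ℝ)..1, K v * g (h * v)‖ ≤ M * (c * ‖h ^ n‖) * |1 - (-1)| :=
        intervalIntegral.norm_integral_le_of_norm_le_const hpt
    _ = 2 * M * c * ‖h ^ n‖ := by norm_num; ring

theorem intervalIntegral_mul_sum_pow_eq_of_moments {K : ℝ → ℝ} {r : ℕ} (hr : 1 ≤ r)
    (hK : IntervalIntegrable K volume (-1) 1) (hK1 : ∫ v in (-1:ℝ)..1, K v = 1)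
    (hKmom : ∀ k : ℕ, 1 ≤ k → k < r → ∫ v in (-1:ℝ)..1, v ^ k * K v = 0) (c : ℕ → ℝ) :
    ∫ v in (-1:ℝ)..1, K v * ∑ k ∈ Finset.range (r + 1), c k * v ^ k =
      c 0 + c r * ∫ v in (-1:ℝ)..1, v ^ r * K v := by
  have hterm : ∀ k,
      ∫ v in (-1:ℝ)..1, K v * (c k * v ^ k) = c k * ∫ v in (-1:ℝ)..1, v ^ k * K v := by
    intro k
    rw [← intervalIntegral.integral_const_mul]
    exact intervalIntegral.integral_congr fun v _ ↦ by ring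
  simp_rw [Finset.mul_sum]
  rw [intervalIntegral.integral_finsetSum fun k _ ↦ hK.mul_continuousOn (by fun_prop)]
  simp_rw [hterm]
  obtain ⟨s, rfl⟩ := Nat.exists_eq_add_of_le' hr
  rw [Finset.sum_range_succ, Finset.sum_range_succ',
    Finset.sum_eq_zero fun k hk ↦ by
      rw [hKmom (k + 1) (by omega) (by simpa using hk), mul_zero]]
  simp [hK1]

theorem intervalIntegral_mul_sub_taylorWithinEval_eq_of_moments {K f : ℝ → ℝ} {r : ℕ}
    (hr : 1 ≤ r) (hK : IntervalIntegrable K volume (-1) 1) (hK1 : ∫ v in (-1:ℝ)..1, K v = 1)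
    (hKmom : ∀ k : ℕ, 1 ≤ k → k < r → ∫ v in (-1:ℝ)..1, v ^ k * K v = 0) {h : ℝ}
    (hKf : IntervalIntegrable (fun v ↦ K v * f (h * v)) volume (-1) 1) :
    ∫ v in (-1:ℝ)..1, K v * (f (h * v) - taylorWithinEval f r univ 0 (h * v)) =
      (∫ v in (-1:ℝ)..1, K v * f (h * v)) - f 0 -
        h ^ r / r ! * (∫ v in (-1:ℝ)..1, v ^ r * K v) * iteratedDeriv r f 0 := by
  have hKT : IntervalIntegrable (fun v ↦ K v * taylorWithinEval f r univ 0 (h * v))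
      volume (-1) 1 := by
    simp_rw [taylorWithinEval_univ_zero_mul]
    exact hK.mul_continuousOn (by fun_prop)
  simp_rw [mul_sub]
  rw [intervalIntegral.integral_sub hKf hKT]
  simp_rw [taylorWithinEval_univ_zero_mul]
  rw [intervalIntegral_mul_sum_pow_eq_of_moments hr hK hK1 hKmom]
  simp only [iteratedDeriv_zero, pow_zero, Nat.factorial_zero]
  ring

theorem intervalIntegral_eq_setIntegral_Iic {K : ℝ → ℝ} (hK : Integrable K) {a : ℝ}
    (ha : ∀ v < a, K v = 0) (u : ℝ) : ∫ v in a..u, K v = ∫ v in Iic u, K v := by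
  rw [← intervalIntegral.integral_Iic_sub_Iic hK.integrableOn hK.integrableOn,
    integral_Iic_eq_integral_Iio (x := a), setIntegral_eq_zero_of_forall_eq_zero (t := Iio a) ha,
    sub_zero]

section

variable {Ω : Type*} [MeasurableSpace Ω] (μ : Measure Ω) [IsFiniteMeasure μ]

theorem integral_setIntegral_Iic_eq_integral_mul_measureReal {K : ℝ → ℝ} (hK : Integrable K)
    {g : Ω → ℝ} (hg : Measurable g) :
    ∫ ω, (∫ v in Iic (g ω), K v) ∂μ = ∫ v, K v * μ.real {ω | v ≤ g ω} := by
  have hint : Integrable (Function.uncurry fun ω v ↦ (Iic (g ω)).indicator K v)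
      (μ.prod volume) := by
    refine ((hK.comp_snd μ).indicator
      (measurableSet_le measurable_snd (hg.comp measurable_fst))).congr (ae_of_all _ fun p ↦ ?_)
    simp [indicator, Function.uncurry]
  calc ∫ ω, (∫ v in Iic (g ω), K v) ∂μ = ∫ ω, (∫ v, (Iic (g ω)).indicator K v) ∂μ := by
        simp_rw [integral_indicator measurableSet_Iic]
    _ = ∫ v, ∫ ω, (Iic (g ω)).indicator K v ∂μ := integral_integral_swap hint
    _ = ∫ v, K v * μ.real {ω | v ≤ g ω} := by
        refine integral_congr_ae (ae_of_all _ fun v ↦ ?_)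
        dsimp only
        have hind : (fun ω ↦ (Iic (g ω)).indicator K v) =
            {ω | v ≤ g ω}.indicator fun _ ↦ K v := by
          ext ω; simp [indicator]
        rw [hind, integral_indicator (measurableSet_le measurable_const hg), setIntegral_const,
          smul_eq_mul, mul_comm]

theorem integral_intervalIntegral_neg_div_eq_intervalIntegral_mul_measureReal {K : ℝ → ℝ}
    (hK : Integrable K) (hKsupp : ∀ u, u ∉ Icc (-1:ℝ) 1 → K u = 0) (hKsym : ∀ u, K (-u) = K u)
    {Λ : Ω → ℝ} (hΛ : Measurable Λ) {h : ℝ} (hh : 0 < h) :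
    ∫ ω, (∫ v in (-1:ℝ)..(-(Λ ω) / h), K v) ∂μ =
      ∫ v in (-1:ℝ)..1, K v * μ.real {ω | Λ ω ≤ h * v} := by
  have hset : ∀ v, {ω | v ≤ -(Λ ω) / h} = {ω | Λ ω ≤ h * -v} := by
    intro v; ext ω
    simp only [mem_ofPred_eq, le_div_iff₀ hh]
    constructor <;> intro <;> linarith
  have hKbelow : ∀ v < -1, K v = 0 := fun v hv ↦ hKsupp v fun hv' ↦ by linarith [hv'.1]
  simp_rw [intervalIntegral_eq_setIntegral_Iic hK hKbelow]
  rw [integral_setIntegral_Iic_eq_integral_mul_measureReal μ hK (by fun_prop)]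
  simp_rw [hset]
  rw [← integral_neg_eq_self (fun v ↦ K v * μ.real {ω | Λ ω ≤ h * -v})]
  simp_rw [neg_neg, hKsym]
  rw [intervalIntegral.integral_of_le (by norm_num), ← integral_Icc_eq_integral_Ioc,
    setIntegral_eq_integral_of_forall_compl_eq_zero fun v hv ↦ by rw [hKsupp v hv, zero_mul]]
end

/-- Smoothing-bias expansion: with an order-r kernel and an r-times continuously
differentiable CDF near 0 with F(0)=τ, the smoothed moment bias satisfies
E[Ĩ(-Λ/h)] - τ = (h^r/r!)(∫ v^r Ĩ'(v) dv) f^{(r-1)}(0) + O(h^{r+1}) as h → 0⁺. -/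
theorem stmt_9 {Ω : Type*} [MeasurableSpace Ω] (μ : Measure Ω) [IsProbabilityMeasure μ]
    (Λ : Ω → ℝ) (hΛ : Measurable Λ)
    (r : ℕ) (hr : 1 ≤ r)
    (K : ℝ → ℝ) (hKmeas : Measurable K)
    (MK : ℝ) (hKbdd : ∀ u, |K u| ≤ MK)
    (hKsupp : ∀ u, u ∉ Set.Icc (-1:ℝ) 1 → K u = 0)
    (hKsym : ∀ u, K (-u) = K u)
    (hK1 : ∫ v in (-1:ℝ)..1, K v = 1)
    (hKmom : ∀ k : ℕ, 1 ≤ k → k < r → ∫ v in (-1:ℝ)..1, v^k * K v = 0)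
    (It : ℝ → ℝ) (hIt : ∀ u, It u = ∫ v in (-1:ℝ)..u, K v)
    (τ : ℝ) (F : ℝ → ℝ) (hF : ∀ x, F x = (μ {ω | Λ ω ≤ x}).toReal)
    (hF0 : F 0 = τ)
    (ε : ℝ) (hε : 0 < ε) (hFdiff : ContDiffOn ℝ (r+1 : ℕ) F (Set.Ioo (-ε) ε)) :
    (fun h : ℝ =>
        (∫ ω, It (-(Λ ω) / h) ∂μ) - τ -
          (h ^ r / (Nat.factorial r : ℝ)) * (∫ v in (-1:ℝ)..1, v ^ r * K v) *
            iteratedDeriv r F 0)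
      =O[nhdsWithin 0 (Set.Ioi 0)] (fun h => h ^ (r + 1)) := by
  have hKint : Integrable K :=
    (Measure.integrableOn_of_bounded measure_Icc_lt_top.ne hKmeas.aestronglyMeasurable
      (ae_of_all _ hKbdd)).integrable_of_forall_notMem_eq_zero hKsupp
  have hFcdf : ∀ x, F x = μ.real {ω | Λ ω ≤ x} := hF
  have hFmeas : Measurable F := Monotone.measurable fun x y hxy ↦ by
    simp only [hFcdf]
    exact measureReal_mono fun ω (hω : Λ ω ≤ x) ↦ hω.trans hxy
  have hTaylor : (fun x ↦ F x - taylorWithinEval F r univ 0 x) =O[𝓝 0] fun x ↦ x ^ (r + 1) := by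
    have hF' : ContDiffAt ℝ (r + 1) F 0 := by
      exact_mod_cast hFdiff.contDiffAt (Ioo_mem_nhds (by linarith) hε)
    simpa only [sub_zero] using hF'.isBigO_sub_taylorWithinEval_univ
  refine ((isBigO_intervalIntegral_mul_comp_mul hKbdd hTaylor).mono nhdsWithin_le_nhds).congr'
    ?_ EventuallyEq.rfl
  filter_upwards [self_mem_nhdsWithin] with h (hh : 0 < h)
  have hKF : IntervalIntegrable (fun v ↦ K v * F (h * v)) volume (-1) 1 :=
    (hKint.mul_bdd (hFmeas.comp (measurable_const_mul h)).aestronglyMeasurable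
      (c := 1) (ae_of_all _ fun v ↦ by
        rw [Function.comp_apply, Real.norm_eq_abs, hFcdf, abs_of_nonneg measureReal_nonneg]
        exact measureReal_le_one)).intervalIntegrable
  have hsmooth : ∫ ω, It (-(Λ ω) / h) ∂μ = ∫ v in (-1:ℝ)..1, K v * F (h * v) := by
    simp_rw [hIt, hFcdf]
    exact integral_intervalIntegral_neg_div_eq_intervalIntegral_mul_measureReal μ hKint hKsupp
      hKsym hΛ hh
  rw [intervalIntegral_mul_sub_taylorWithinEval_eq_of_moments hr hKint.intervalIntegrable hK1
    hKmom hKF, hsmooth, hF0]
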